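/- arXiv:math/0403495 — 3 statements merged into one kernel-verified Lean document; each statement's English description precedes it below -/
import Mathlib

section
/- Every continuous bounded map f : 𝖱 → 𝖱 from the closed long ray to itself is eventually constant; that is, there exists z ∈ 𝖱 such that f(x) = f(z) for every x ≥ z. -/
noncomputable section
open Set

/-- The first uncountable ordinal `ω₁`. -/
def Omega1 : Ordinal := Ordinal.omega 1

/-- The closed long ray `𝖱`: `ω₁ × [0,1)` with the lexicographic order. -/
def LongRay : Type 1 := {o : Ordinal // o < Omega1} ×ₗ (Set.Ico (0:ℝ) 1)

instance : LinearOrder LongRay :=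
  inferInstanceAs (LinearOrder ({o : Ordinal // o < Omega1} ×ₗ (Set.Ico (0:ℝ) 1)))

/-- `𝖱` carries the order topology. -/
instance : TopologicalSpace LongRay := Preorder.topology LongRay
instance : OrderTopology LongRay := ⟨rfl⟩

lemma omega1_pos : (0 : Ordinal) < Omega1 := Ordinal.omega_pos 1

/-- The point `0 = (0,0)` of the long ray. -/
def rayZero : LongRay := toLex (⟨0, omega1_pos⟩, ⟨0, by simp⟩)

/-- Identification of the countable ordinal `o` with the point `(o,0)` of the long ray
(junk value for `o ≥ ω₁`). -/
def ordR (o : Ordinal) : LongRay :=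
  if h : o < Omega1 then toLex (⟨o, h⟩, ⟨0, by simp⟩) else rayZero

/-- The `I`-diagonal at height `c` (only the values of `c` off `I` are relevant). -/
def Delta (n : ℕ) (I : Finset (Fin n)) (c : Fin n → LongRay) : Set (Fin n → LongRay) :=
  {x | (∀ i ∈ I, ∀ i' ∈ I, x i = x i') ∧ ∀ j ∉ I, x j = c j}

/-- `f` is `I`-cofinal if `f` restricted to `Δ_I = Δ_I(0)` is unbounded. -/
def ICofinal (n : ℕ) (f : (Fin n → LongRay) → LongRay) (I : Finset (Fin n)) : Prop :=
  ¬ BddAbove (f '' Delta n I (fun _ => rayZero))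

/-- The cofinality class `𝔠(f) = {I : f is I-cofinal}`. -/
def cofClass (n : ℕ) (f : (Fin n → LongRay) → LongRay) : Set (Finset (Fin n)) :=
  {I | ICofinal n f I}

/-- `M_I(c) = {x : x_i ≥ c for all i ∈ I}`. -/
def MSet (n : ℕ) (I : Finset (Fin n)) (c : LongRay) : Set (Fin n → LongRay) :=
  {x | ∀ i ∈ I, c ≤ x i}

/-- `E_I(b,d) = {x ∈ M_I(d) : x_j = b_j for all j ∉ I}`. -/
def ESet (n : ℕ) (I : Finset (Fin n)) (b : Fin n → LongRay) (d : LongRay) :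
    Set (Fin n → LongRay) :=
  {x | (∀ i ∈ I, d ≤ x i) ∧ ∀ j ∉ I, x j = b j}

/-!
Two closed unbounded subsets `F`, `G` of the long ray meet: choosing alternately points of `F`
and of `G`, each above the previous one, gives an increasing sequence which is bounded (countable
subsets of `𝖱` are bounded), and its supremum lies in both closed sets. Hence, for `p < q`, the
disjoint closed sets `{f ≤ p}` and `{q ≤ f}` are not both unbounded: eventually `p < f` or
eventually `f < q`. Below a bound of `f`, the points with rational fractional part form a countable
set `D` such that any two values of `f` are separated by some `p < q` in `D`. Countably many such
eventual statements hold simultaneously, so beyond some `z` no two values of `f` can be separated.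
-/
open Filter Topology

theorem countableInterFilter_atTop {X : Type*} [Preorder X] [IsDirectedOrder X] [Nonempty X]
    (hX : ∀ s : Set X, s.Countable → BddAbove s) : CountableInterFilter (atTop : Filter X) := by
  refine ⟨fun S hS hSat => ?_⟩
  choose! b hb using fun s hs => mem_atTop_sets.1 (hSat s hs)
  obtain ⟨c, hc⟩ := hX _ (hS.image b)
  exact mem_atTop_sets.2 ⟨c, fun x hx s hs => hb s hs x ((hc (mem_image_of_mem b hs)).trans hx)⟩

section

variable {X Y : Type*} [ConditionallyCompleteLinearOrder X] [TopologicalSpace X] [OrderTopology X]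

theorem IsClosed.inter_nonempty_of_frequently_atTop (hX : ∀ s : Set X, s.Countable → BddAbove s)
    {F G : Set X} (hF : IsClosed F) (hG : IsClosed G) (hFf : ∃ᶠ x in atTop, x ∈ F)
    (hGf : ∃ᶠ x in atTop, x ∈ G) : (F ∩ G).Nonempty := by
  obtain ⟨x₀, -⟩ := hFf.exists
  choose φ hφ_ge hφF using frequently_atTop.1 hFf
  choose ψ hψ_ge hψG using frequently_atTop.1 hGf
  set v : ℕ → X := fun n => (ψ ∘ φ)^[n] x₀
  have hv_succ (n : ℕ) : v (n + 1) = ψ (φ (v n)) := Function.iterate_succ_apply' _ _ _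
  have hv_mono : Monotone v :=
    monotone_nat_of_le_succ fun n => (hφ_ge _).trans ((hψ_ge _).trans_eq (hv_succ n).symm)
  have hv : Tendsto v atTop (𝓝 (⨆ n, v n)) :=
    tendsto_atTop_ciSup hv_mono (hX _ (countable_range v))
  have hv' : Tendsto (fun n => v (n + 1)) atTop (𝓝 (⨆ n, v n)) :=
    hv.comp (tendsto_add_atTop_nat 1)
  have hφv : Tendsto (fun n => φ (v n)) atTop (𝓝 (⨆ n, v n)) :=
    tendsto_of_tendsto_of_tendsto_of_le_of_le hv hv' (fun n => hφ_ge _)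
      fun n => (hψ_ge _).trans_eq (hv_succ n).symm
  exact ⟨_, hF.mem_of_tendsto hφv (.of_forall fun n => hφF _),
    hG.mem_of_tendsto hv' (.of_forall fun n => (hv_succ n).symm ▸ hψG _)⟩

variable [LinearOrder Y] [TopologicalSpace Y] [OrderClosedTopology Y]

theorem Continuous.eventually_gt_or_eventually_lt (hX : ∀ s : Set X, s.Countable → BddAbove s)
    {f : X → Y} (hf : Continuous f) {p q : Y} (hpq : p < q) :
    (∀ᶠ x in atTop, p < f x) ∨ ∀ᶠ x in atTop, f x < q := by
  by_contra! h
  obtain ⟨x, hxp, hqx⟩ := (isClosed_le hf continuous_const).inter_nonempty_of_frequently_atTop hX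
    (isClosed_le continuous_const hf) h.1 h.2
  exact (hpq.trans_le hqx).not_ge hxp

theorem Continuous.exists_forall_ge_eq_of_countable_separating [Nonempty X]
    (hX : ∀ s : Set X, s.Countable → BddAbove s) {f : X → Y} (hf : Continuous f) {D : Set Y}
    (hD : D.Countable)
    (hsep : ∀ a ∈ range f, ∀ b ∈ range f, a < b → ∃ p ∈ D, ∃ q ∈ D, a ≤ p ∧ p < q ∧ q ≤ b) :
    ∃ z, ∀ x, z ≤ x → f x = f z := by
  have := countableInterFilter_atTop hX
  have : CountableInterFilter (atTop ×ˢ atTop : Filter (X × X)) := countableInterFilter_inf _ _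
  have hpair : ∀ pq ∈ {pq ∈ D ×ˢ D | pq.1 < pq.2}, ∀ᶠ xy : X × X in atTop ×ˢ atTop,
      ¬ (f xy.1 ≤ pq.1 ∧ pq.2 ≤ f xy.2) := by
    rintro ⟨p, q⟩ ⟨-, hpq⟩
    rcases hf.eventually_gt_or_eventually_lt hX hpq with h | h
    · exact (h.prod_inl atTop).mono fun xy hp hle => (hp.trans_le hle.1).false
    · exact (h.prod_inr atTop).mono fun xy hq hle => (hq.trans_le hle.2).false
  have hanti : ∀ᶠ xy : X × X in atTop ×ˢ atTop, f xy.2 ≤ f xy.1 := by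
    filter_upwards [(eventually_countable_ball ((hD.prod hD).mono (sep_subset _ _))).2 hpair]
      with ⟨x, y⟩ hxy
    by_contra! hlt
    obtain ⟨p, hp, q, hq, hxp, hpq, hqy⟩ := hsep _ (mem_range_self x) _ (mem_range_self y) hlt
    exact hxy (p, q) ⟨⟨hp, hq⟩, hpq⟩ ⟨hxp, hqy⟩
  rw [prod_atTop_atTop_eq] at hanti
  obtain ⟨z, hz⟩ := eventually_atTop_prod_self.1 hanti
  exact ⟨z, fun x hx => le_antisymm (hz z x le_rfl hx) (hz x z hx le_rfl)⟩

end

namespace LongRay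

open Ordinal Cardinal

def ord (x : LongRay) : Ordinal := (ofLex x).1

def frac (x : LongRay) : ℝ := (ofLex x).2

theorem ord_lt_omega1 (x : LongRay) : ord x < Omega1 := (ofLex x).1.2

theorem frac_mem_Ico (x : LongRay) : frac x ∈ Ico (0 : ℝ) 1 := (ofLex x).2.2

theorem le_iff {x y : LongRay} : x ≤ y ↔ ord x < ord y ∨ ord x = ord y ∧ frac x ≤ frac y := by
  simp only [ord, frac, ← Subtype.ext_iff, Subtype.coe_le_coe, Subtype.coe_lt_coe]
  exact Prod.Lex.le_iff

theorem lt_iff {x y : LongRay} : x < y ↔ ord x < ord y ∨ ord x = ord y ∧ frac x < frac y := by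
  simp only [ord, frac, ← Subtype.ext_iff, Subtype.coe_lt_coe]
  exact Prod.Lex.lt_iff

theorem ord_mono : Monotone ord := fun _ _ h => by
  rcases le_iff.1 h with h | h
  exacts [h.le, h.1.le]

theorem lt_of_ord_lt {x y : LongRay} (h : ord x < ord y) : x < y := lt_iff.2 (Or.inl h)

theorem ord_frac_injective : Function.Injective fun x : LongRay => (ord x, frac x) := by
  intro x y h
  simp only [Prod.mk.injEq] at h
  exact congrArg toLex (Prod.ext (Subtype.ext h.1) (Subtype.ext h.2))

theorem rayZero_le (x : LongRay) : rayZero ≤ x :=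
  le_iff.2 ((zero_le : 0 ≤ ord x).lt_or_eq.imp_right fun h => ⟨h, (frac_mem_Ico x).1⟩)

theorem add_one_lt_omega1 {o : Ordinal} (h : o < Omega1) : o + 1 < Omega1 :=
  (isSuccLimit_omega 1).add_one_lt h

def mk (o : Ordinal) (ho : o < Omega1) (t : ℝ) (ht : t ∈ Ico (0 : ℝ) 1) : LongRay :=
  toLex (⟨o, ho⟩, ⟨t, ht⟩)

@[simp] theorem ord_mk {o ho t ht} : ord (mk o ho t ht) = o := rfl

@[simp] theorem frac_mk {o ho t ht} : frac (mk o ho t ht) = t := rfl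

/-- `(o, t)` for `t < 1`; at `t = 1` it is `(o + 1, 0)`, the limit of `(o, t)` as `t → 1`. -/
def mkIcc (o : Ordinal) (ho : o < Omega1) (t : ℝ) (ht : t ∈ Icc (0 : ℝ) 1) : LongRay :=
  if h : t < 1 then mk o ho t ⟨ht.1, h⟩
  else mk (o + 1) (add_one_lt_omega1 ho) 0 (left_mem_Ico.2 one_pos)

theorem mkIcc_le_iff {o ho t ht} {u : LongRay} :
    mkIcc o ho t ht ≤ u ↔ o < ord u ∨ o = ord u ∧ t ≤ frac u := by
  unfold mkIcc
  split_ifs with h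
  · exact le_iff
  · obtain rfl : t = 1 := le_antisymm ht.2 (not_lt.1 h)
    have hu := frac_mem_Ico u
    simp only [le_iff, ord_mk, frac_mk, hu.1, and_true, ← le_iff_lt_or_eq, Order.add_one_le_iff,
      not_le.2 hu.2, and_false, or_false]

theorem exists_isLUB {s : Set LongRay} (hs : BddAbove s) : ∃ a, IsLUB s a := by
  obtain ⟨b, hb⟩ := hs
  set σ := sSup (ord '' s)
  -- if no point of `s` lies at level `σ`, then `τ = sSup ∅ = 0` and `(σ, 0)` is still the LUB
  set τ := sSup (frac '' {x ∈ s | ord x = σ})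
  have hbdd : ord b ∈ upperBounds (ord '' s) := forall_mem_image.2 fun x hx => ord_mono (hb hx)
  have hσb : σ ≤ ord b := csSup_le' hbdd
  have hτ : τ ∈ Icc (0 : ℝ) 1 :=
    ⟨Real.sSup_nonneg (forall_mem_image.2 fun x _ => (frac_mem_Ico x).1),
     Real.sSup_le (forall_mem_image.2 fun x _ => (frac_mem_Ico x).2.le) zero_le_one⟩
  refine ⟨mkIcc σ (hσb.trans_lt (ord_lt_omega1 b)) τ hτ, isLUB_iff_le_iff.2 fun u => ?_⟩
  have hord (x) (hx : x ∈ s) : ord x ≤ σ := le_csSup ⟨_, hbdd⟩ (mem_image_of_mem _ hx)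
  have hfrac (x) (hx : x ∈ s) (hxσ : ord x = σ) : frac x ≤ τ :=
    le_csSup ⟨1, forall_mem_image.2 fun x _ => (frac_mem_Ico x).2.le⟩ (mem_image_of_mem _ ⟨hx, hxσ⟩)
  rw [mkIcc_le_iff]
  constructor
  · rintro (h | ⟨h, h'⟩) x hx
    · exact (lt_of_ord_lt ((hord x hx).trans_lt h)).le
    · rcases (hord x hx).lt_or_eq with hxσ | hxσ
      · exact (lt_of_ord_lt (h ▸ hxσ)).le
      · exact le_iff.2 (Or.inr ⟨hxσ.trans h, (hfrac x hx hxσ).trans h'⟩)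
  · intro hu
    have hσu : σ ≤ ord u := csSup_le' (forall_mem_image.2 fun x hx => ord_mono (hu hx))
    refine hσu.lt_or_eq.imp_right fun h => ⟨h, Real.sSup_le ?_ (frac_mem_Ico u).1⟩
    rintro _ ⟨x, ⟨hx, hxσ⟩, rfl⟩
    rcases le_iff.1 (hu hx) with h' | h'
    · exact absurd h' (hxσ.trans h).not_lt
    · exact h'.2

instance : Nonempty LongRay := ⟨rayZero⟩

open Classical in
noncomputable instance : SupSet LongRay :=
  ⟨fun s => if h : BddAbove s then (exists_isLUB h).choose
    else (exists_isLUB bddAbove_empty).choose⟩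

theorem isLUB_sSup {s : Set LongRay} (hs : BddAbove s) : IsLUB s (sSup s) := by
  simp only [sSup, dif_pos hs]
  exact (exists_isLUB hs).choose_spec

noncomputable abbrev conditionallyCompleteLinearOrder :
    ConditionallyCompleteLinearOrder LongRay where
  __ := (inferInstance : LinearOrder LongRay)
  __ := LinearOrder.toLattice
  __ := conditionallyCompleteLatticeOfLatticeOfsSup LongRay fun _ hs _ => isLUB_sSup hs
  csSup_of_not_bddAbove s hs := by simp only [sSup, dif_neg hs, dif_pos bddAbove_empty]
  csInf_of_not_bddBelow s hs := (hs ⟨rayZero, fun x _ => rayZero_le x⟩).elim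

theorem bddAbove_of_countable {s : Set LongRay} (hs : s.Countable) : BddAbove s := by
  have : Countable s := hs.to_subtype
  have hσ : ⨆ x : s, ord x < Omega1 := Ordinal.iSup_lt_omega_one fun x => ord_lt_omega1 x
  refine ⟨mk _ (add_one_lt_omega1 hσ) 0 (left_mem_Ico.2 one_pos), fun x hx => (lt_of_ord_lt ?_).le⟩
  exact Order.lt_add_one_iff.2 (Ordinal.le_iSup (fun x : s => ord x) ⟨x, hx⟩)

theorem countable_Iio_of_lt_omega1 {o : Ordinal.{0}} (ho : o < Omega1) : (Iio o).Countable := by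
  rw [← le_aleph0_iff_set_countable, Cardinal.mk_Iio_ordinal, lift_le_aleph0, ← lt_aleph_one_iff,
    ← lt_omega_iff_card_lt]
  exact ho

theorem countable_setOf_le_ratFrac (B : LongRay) :
    {x | x ≤ B ∧ frac x ∈ range ((↑) : ℚ → ℝ)}.Countable := by
  refine (((countable_Iio_of_lt_omega1 (add_one_lt_omega1 (ord_lt_omega1 B))).prod
    (countable_range ((↑) : ℚ → ℝ))).preimage ord_frac_injective).mono ?_
  rintro x ⟨hxB, hx⟩
  exact ⟨Order.lt_add_one_iff.2 (ord_mono hxB), hx⟩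

theorem exists_ratFrac_between {a b : LongRay} (hab : a < b) :
    ∃ p, frac p ∈ range ((↑) : ℚ → ℝ) ∧ a < p ∧ p < b := by
  obtain ⟨s, has, hs1, hsb⟩ : ∃ s, frac a < s ∧ s ≤ 1 ∧
      (ord a < ord b ∨ ord a = ord b ∧ s ≤ frac b) := by
    rcases lt_iff.1 hab with h | ⟨h, h'⟩
    · exact ⟨1, (frac_mem_Ico a).2, le_rfl, Or.inl h⟩
    · exact ⟨frac b, h', (frac_mem_Ico b).2.le, Or.inr ⟨h, le_rfl⟩⟩
  obtain ⟨r, har, hrs⟩ := exists_rat_btwn has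
  refine ⟨mk (ord a) (ord_lt_omega1 a) r ⟨(frac_mem_Ico a).1.trans har.le, hrs.trans_le hs1⟩,
    mem_range_self r, lt_iff.2 (Or.inr ⟨rfl, har⟩), lt_iff.2 ?_⟩
  exact hsb.imp_right fun h => ⟨h.1, hrs.trans_le h.2⟩

theorem exists_countable_separating (B : LongRay) : ∃ D : Set LongRay, D.Countable ∧
    ∀ a b, a < b → b ≤ B → ∃ p ∈ D, ∃ q ∈ D, a ≤ p ∧ p < q ∧ q ≤ b := by
  refine ⟨_, countable_setOf_le_ratFrac B, fun a b hab hbB => ?_⟩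
  obtain ⟨p, hp, hap, hpb⟩ := exists_ratFrac_between hab
  obtain ⟨q, hq, hpq, hqb⟩ := exists_ratFrac_between hpb
  exact ⟨p, ⟨hpb.le.trans hbB, hp⟩, q, ⟨hqb.le.trans hbB, hq⟩, hap.le, hpq, hqb.le⟩

end LongRay

/-- every continuous bounded map `f : 𝖱 → 𝖱` is eventually constant. -/
theorem eventually_constant_of_bounded (f : LongRay → LongRay)
    (hf : Continuous f) (hbd : BddAbove (Set.range f)) :
    ∃ z : LongRay, ∀ x : LongRay, z ≤ x → f x = f z := by
  obtain ⟨B, hB⟩ := hbd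
  obtain ⟨D, hD, hsep⟩ := LongRay.exists_countable_separating B
  let := LongRay.conditionallyCompleteLinearOrder
  exact hf.exists_forall_ge_eq_of_countable_separating (fun _ => LongRay.bddAbove_of_countable) hD
    fun a _ b hb hab => hsep a b hab (hB hb)
end
end

section
/- Let 𝒮 = {I_1,…,I_k} be a nonempty antichain in 𝒫(N)∖{∅}, and define f_𝒮 : 𝖱^n → 𝖱 by f_𝒮(x_1,…,x_n) = max_{ℓ=1,…,k} min_{i∈I_ℓ} x_i. Then f_𝒮 is continuous and its cofinality class is exactly the upward closure of 𝒮, i.e., 𝔠(f_𝒮) = {J ⊆ N : I_ℓ ⊆ J for some ℓ}; in particular the minimal elements of 𝔠(f_𝒮) are exactly the elements of 𝒮. -/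
noncomputable section
open Set

/-!
If no `I ∈ 𝒮` is contained in `J`, every block `I` has a coordinate outside `J`, which is `0`
on `Δ_J`; so `f_𝒮 ≤ 0` there. If `I ⊆ J` for some `I ∈ 𝒮`, then at the point of `Δ_J` with
value `t` on `J` the block `I` has minimum `t`, so `f_𝒮 ≥ t`; as `𝖱` has no maximum,
`f_𝒮` is unbounded on `Δ_J`.
-/

namespace Finset

variable {ι α : Type*} [LinearOrder α] {S : Finset (Finset ι)} (hS : S.attach.Nonempty)
  (hne : ∀ I ∈ S, I.Nonempty)

lemma sup'_inf'_le_iff (x : ι → α) {c : α} :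
    S.attach.sup' hS (fun I => I.1.inf' (hne I.1 I.2) x) ≤ c ↔ ∀ I ∈ S, ∃ i ∈ I, x i ≤ c := by
  simp [sup'_le_iff, inf'_le_iff]

lemma le_sup'_inf'_iff (x : ι → α) {t : α} :
    t ≤ S.attach.sup' hS (fun I => I.1.inf' (hne I.1 I.2) x) ↔ ∃ I ∈ S, ∀ i ∈ I, t ≤ x i := by
  simp [le_sup'_iff, le_inf'_iff]

lemma continuous_sup'_inf' [TopologicalSpace α] [OrderTopology α] :
    Continuous fun x : ι → α => S.attach.sup' hS (fun I => I.1.inf' (hne I.1 I.2) x) :=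
  Continuous.finset_sup'_apply hS fun I _ =>
    Continuous.finset_inf'_apply (hne I.1 I.2) fun i _ => continuous_apply i

end Finset

instance : NoMaxOrder LongRay :=
  inferInstanceAs (NoMaxOrder ({o : Ordinal // o < Omega1} ×ₗ (Set.Ico (0:ℝ) 1)))

lemma piecewise_mem_delta (n : ℕ) (J : Finset (Fin n)) (t : LongRay) (c : Fin n → LongRay) :
    J.piecewise (fun _ => t) c ∈ Delta n J c :=
  ⟨fun i hi i' hi' => by simp [hi, hi'], fun j hj => by simp [hj]⟩

/-- the canonical representant `f_𝒮(x) = max_{I ∈ 𝒮} min_{i ∈ I} x_i`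
of a nonempty antichain `𝒮` is continuous and its cofinality class is the upward
closure of `𝒮`. -/
theorem canonical_representant_cofClass (n : ℕ) (S : Finset (Finset (Fin n)))
    (hS : S.Nonempty) (hne : ∀ I ∈ S, I.Nonempty)
    (f : (Fin n → LongRay) → LongRay)
    (hf : ∀ x, f x = S.attach.sup' (by rwa [Finset.attach_nonempty_iff])
      (fun I => I.1.inf' (hne I.1 I.2) x)) :
    Continuous f ∧ cofClass n f = {J : Finset (Fin n) | ∃ I ∈ S, I ⊆ J} := by
  have hSa : S.attach.Nonempty := by rwa [Finset.attach_nonempty_iff]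
  obtain rfl : f = fun x => S.attach.sup' hSa (fun I => I.1.inf' (hne I.1 I.2) x) := funext hf
  refine ⟨Finset.continuous_sup'_inf' hSa hne, Set.ext fun J => ⟨fun hJ => ?_, ?_⟩⟩
  · show ∃ I ∈ S, I ⊆ J
    by_contra! hno
    refine hJ ⟨rayZero, ?_⟩
    rintro _ ⟨x, hx, rfl⟩
    refine (Finset.sup'_inf'_le_iff hSa hne x).2 fun I hI => ?_
    obtain ⟨i, hiI, hiJ⟩ := Finset.not_subset.1 (hno I hI)
    exact ⟨i, hiI, (hx.2 i hiJ).le⟩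
  · rintro ⟨I, hIS, hIJ⟩
    refine not_bddAbove_iff.2 fun b => ?_
    obtain ⟨t, hbt⟩ := exists_gt b
    refine ⟨_, ⟨_, piecewise_mem_delta n J t _, rfl⟩, hbt.trans_le ?_⟩
    exact (Finset.le_sup'_inf'_iff hSa hne _).2
      ⟨I, hIS, fun i hi => (Finset.piecewise_eq_of_mem J (fun _ => t) _ (hIJ hi)).ge⟩
end
end

section
/- Let M be a topological manifold (a Hausdorff topological space in which every point has an open neighborhood homeomorphic to an open subset of ℝ^d for some fixed d). If there exists a topological embedding of ω₁ (with its order topology) into M, then M is not contractible. -/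
noncomputable section
open Set

/-- The space `ω₁` of countable ordinals with its order topology. -/
def CountableOrdinals : Type 1 := {o : Ordinal // o < Omega1}

instance : LinearOrder CountableOrdinals :=
  inferInstanceAs (LinearOrder {o : Ordinal // o < Omega1})

instance : TopologicalSpace CountableOrdinals := Preorder.topology CountableOrdinals
instance : OrderTopology CountableOrdinals := ⟨rfl⟩

/-!
Let `H` be a contraction of `M` and `e` the embedded copy of `ω₁`. The set of times `t` at which
`b ↦ H (t, e b)` is eventually constant contains `1` but not `0`, as `e` is injective; we show it is
clopen in `[0, 1]`. Closedness holds because a countable intersection of tails of `ω₁` contains a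
tail. Openness rests on two facts: a continuous map from `ω₁` into a metrizable space (here, a
chart of `M`) is eventually constant, and a closing-off argument along `ω₁` shows that near a time
where the homotopy is eventually constant, it eventually stays inside a chart.
-/

open Filter Topology TopologicalSpace

theorem Function.Injective.not_eventuallyConst_atTop {α β : Type*} [SemilatticeSup α]
    [Nonempty α] [NoMaxOrder α] {f : α → β} (hf : Function.Injective f) :
    ¬ EventuallyConst f atTop := by
  intro h
  obtain ⟨a, ha⟩ := eventuallyConst_atTop.1 h
  obtain ⟨b, hab⟩ := exists_gt a
  exact hab.ne' (hf (ha b hab.le))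

namespace CountableOrdinals

instance : Nonempty CountableOrdinals := ⟨⟨0, omega1_pos⟩⟩

instance : NoMaxOrder CountableOrdinals :=
  ⟨fun a => ⟨⟨Order.succ a.1, (Cardinal.isSuccLimit_omega 1).succ_lt a.2⟩, Order.lt_succ a.1⟩⟩

theorem exists_isLUB_range {ι : Type*} [Countable ι] (g : ι → CountableOrdinals) :
    ∃ c, IsLUB (Set.range g) c := by
  refine ⟨⟨⨆ i, (g i).1, Ordinal.iSup_lt_omega_one fun i => (g i).2⟩, ?_, ?_⟩
  · rintro _ ⟨i, rfl⟩
    exact Ordinal.le_iSup (fun i => (g i).1) i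
  · exact fun b hb => Ordinal.iSup_le fun i => hb ⟨i, rfl⟩

instance : CountableInterFilter (atTop : Filter CountableOrdinals) where
  countable_sInter_mem S hS hmem := by
    have := hS.to_subtype
    choose a ha using fun s : S => mem_atTop_sets.1 (hmem s s.2)
    obtain ⟨c, hc⟩ := exists_isLUB_range a
    exact mem_atTop_sets.2 ⟨c, fun b hb s hs => ha ⟨s, hs⟩ b ((hc.1 ⟨_, rfl⟩).trans hb)⟩

theorem exists_tendsto_of_monotone {g : ℕ → CountableOrdinals} (hg : Monotone g) :
    ∃ c, Tendsto g atTop (𝓝 c) :=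
  (exists_isLUB_range g).imp fun _ hc => tendsto_atTop_isLUB hg hc

theorem exists_seq_tendsto_of_le_apply (F : ℕ → CountableOrdinals → CountableOrdinals)
    (hF : ∀ n a, a ≤ F n a) (a₀ : CountableOrdinals) :
    ∃ g : ℕ → CountableOrdinals, ∃ c, a₀ ≤ c ∧ Tendsto g atTop (𝓝 c) ∧
      Tendsto (fun n => F n (g n)) atTop (𝓝 c) := by
  let g : ℕ → CountableOrdinals := fun n => Nat.rec (motive := fun _ => CountableOrdinals) a₀ F n
  have hg : Monotone g := monotone_nat_of_le_succ fun n => hF n (g n)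
  obtain ⟨c, hc⟩ := exists_tendsto_of_monotone hg
  exact ⟨g, c, hg.ge_of_tendsto hc 0, hc, hc.comp (tendsto_add_atTop_nat 1)⟩

theorem exists_forall_ge_dist_lt {X : Type*} [PseudoMetricSpace X] {f : CountableOrdinals → X}
    (hf : Continuous f) {ε : ℝ} (hε : 0 < ε) : ∃ a, ∀ b, a ≤ b → dist (f b) (f a) < ε := by
  by_contra! h
  choose F hF hdist using h
  obtain ⟨g, c, -, hg, hFg⟩ :=
    exists_seq_tendsto_of_le_apply (fun _ => F) (fun _ => hF) (Classical.arbitrary _)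
  have hlim : Tendsto (fun n => dist (f (F (g n))) (f (g n))) atTop (𝓝 0) := by
    simpa using ((hf.tendsto c).comp hFg).dist ((hf.tendsto c).comp hg)
  exact hε.not_ge (ge_of_tendsto' hlim fun n => hdist (g n))

section

variable {X Y : Type*} [TopologicalSpace X] [TopologicalSpace Y]

theorem eventuallyConst_of_continuous [MetrizableSpace X] {f : CountableOrdinals → X}
    (hf : Continuous f) : EventuallyConst f atTop := by
  let := TopologicalSpace.metrizableSpaceMetric X
  choose a ha using fun n : ℕ => exists_forall_ge_dist_lt hf (Nat.one_div_pos_of_nat (n := n))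
  have hev : ∀ᶠ b in atTop, ∀ n : ℕ, dist (f b) (f (a n)) < 1 / (n + 1) :=
    eventually_countable_forall.2 fun n => eventually_atTop.2 ⟨a n, ha n⟩
  obtain ⟨i, hi⟩ := eventually_atTop.1 hev
  refine eventuallyConst_atTop.2 ⟨i, fun j hj => eq_of_forall_dist_le fun ε hε => ?_⟩
  obtain ⟨n, hn⟩ := exists_nat_one_div_lt (half_pos hε)
  calc dist (f j) (f i) ≤ dist (f j) (f (a n)) + dist (f i) (f (a n)) := dist_triangle_right ..
    _ ≤ ε := by linarith [hi j hj n, hi i le_rfl n]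

theorem eventuallyConst_of_eventually_mem {f : CountableOrdinals → X} (hf : Continuous f)
    {U : Set X} [MetrizableSpace U] (hU : ∀ᶠ b in atTop, f b ∈ U) : EventuallyConst f atTop := by
  obtain ⟨a, ha⟩ := eventually_atTop.1 hU
  let f' : CountableOrdinals → U := fun b => ⟨f (max b a), ha _ (le_max_right b a)⟩
  have hf' : Continuous f' := (hf.comp (continuous_id.max continuous_const)).subtype_mk _
  refine ((eventuallyConst_of_continuous hf').comp Subtype.val).congr
    (eventually_atTop.2 ⟨a, fun b hb => ?_⟩)
  simp [f', max_eq_left hb]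

theorem tendsto_nhds_prod_atTop [FirstCountableTopology Y] {G : Y × CountableOrdinals → X}
    (hG : Continuous G) {t : Y} {q : X} (ht : ∀ᶠ b in atTop, G (t, b) = q) :
    Tendsto G (𝓝 t ×ˢ atTop) (𝓝 q) := by
  obtain ⟨U, hU⟩ := (𝓝 t).exists_antitone_basis
  obtain ⟨a₀, ha₀⟩ := eventually_atTop.1 ht
  rw [tendsto_def]
  intro W hW
  suffices ∃ n a, ∀ s ∈ U n, ∀ b, a ≤ b → G (s, b) ∈ W by
    obtain ⟨n, a, h⟩ := this
    exact mem_of_superset (prod_mem_prod (hU.mem n) (Ici_mem_atTop a))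
      fun p hp => h p.1 hp.1 p.2 hp.2
  by_contra! h
  choose s hs b hb hbW using h
  obtain ⟨g, c, hc, -, hbg⟩ := exists_seq_tendsto_of_le_apply b hb a₀
  have hsg : Tendsto (fun n => s n (g n)) atTop (𝓝 t) := hU.tendsto fun n => hs n (g n)
  have hlim : Tendsto (fun n => G (s n (g n), b n (g n))) atTop (𝓝 q) :=
    ha₀ c hc ▸ (hG.tendsto _).comp (hsg.prodMk_nhds hbg)
  obtain ⟨n, hn⟩ := (hlim.eventually hW).exists
  exact hbW n (g n) hn

theorem isOpen_setOf_eventuallyConst [FirstCountableTopology Y]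
    (hX : ∀ x : X, ∃ U ∈ 𝓝 x, MetrizableSpace U) {G : Y × CountableOrdinals → X}
    (hG : Continuous G) : IsOpen {t | EventuallyConst (fun b => G (t, b)) atTop} := by
  refine isOpen_iff_mem_nhds.2 fun t ht => ?_
  have : Nonempty X := ⟨G (t, Classical.arbitrary _)⟩
  obtain ⟨q, hq⟩ := ht.eventuallyEq_const
  obtain ⟨U, hU, _⟩ := hX q
  filter_upwards [((tendsto_nhds_prod_atTop hG hq).eventually hU).curry] with s hs
  exact eventuallyConst_of_eventually_mem (hG.comp (Continuous.prodMk_right s)) hs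

theorem isClosed_setOf_eventuallyConst [SequentialSpace Y] [T2Space X]
    {G : Y × CountableOrdinals → X} (hG : ∀ b, Continuous fun t => G (t, b)) :
    IsClosed {t | EventuallyConst (fun b => G (t, b)) atTop} := by
  refine IsSeqClosed.isClosed fun u t hu hut => ?_
  choose a ha using fun n => eventuallyConst_atTop.1 (hu n)
  obtain ⟨i, hi⟩ := eventually_atTop.1
    (eventually_countable_forall.2 fun n => eventually_atTop.2 ⟨a n, ha n⟩)
  refine eventuallyConst_atTop.2 ⟨i, fun j hj => ?_⟩
  have hji : ∀ n, G (u n, j) = G (u n, i) := fun n => (hi j hj n).trans (hi i le_rfl n).symm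
  exact tendsto_nhds_unique (((hG j).tendsto t).comp hut)
    ((((hG i).tendsto t).comp hut).congr fun n => (hji n).symm)

end

end CountableOrdinals

/-- a topological manifold (Hausdorff, locally homeomorphic to open
subsets of `ℝ^d`) containing a topological copy of `ω₁` is not contractible. -/
theorem not_contractible_of_embeds_omega1 (M : Type*) [TopologicalSpace M] [T2Space M]
    (d : ℕ)
    (hman : ∀ x : M, ∃ U : Set M, x ∈ U ∧ IsOpen U ∧
      ∃ V : Set (Fin d → ℝ), IsOpen V ∧ Nonempty (U ≃ₜ V))
    (e : CountableOrdinals → M) (he : Topology.IsEmbedding e) :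
    ¬ ContractibleSpace M := by
  intro _
  obtain ⟨p, ⟨H⟩⟩ := id_nullhomotopic M
  have hloc : ∀ x : M, ∃ U ∈ 𝓝 x, MetrizableSpace U := fun x => by
    obtain ⟨U, hxU, hU, V, -, ⟨ψ⟩⟩ := hman x
    exact ⟨U, hU.mem_nhds hxU, (Topology.IsEmbedding.subtypeVal.comp ψ.isEmbedding).metrizableSpace⟩
  let G : unitInterval × CountableOrdinals → M := fun x => H (x.1, e x.2)
  have hG : Continuous G :=
    H.continuous.comp (continuous_fst.prodMk (he.continuous.comp continuous_snd))
  have hT : IsClopen {t | EventuallyConst (fun b => G (t, b)) atTop} :=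
    ⟨CountableOrdinals.isClosed_setOf_eventuallyConst fun b => hG.comp (.prodMk_left b),
      CountableOrdinals.isOpen_setOf_eventuallyConst hloc hG⟩
  have h1 : (1 : unitInterval) ∈ {t | EventuallyConst (fun b => G (t, b)) atTop} := by
    simp [G, EventuallyConst.const]
  have h0 : (0 : unitInterval) ∉ {t | EventuallyConst (fun b => G (t, b)) atTop} := by
    simpa [G] using he.injective.not_eventuallyConst_atTop
  exact h0 (hT.eq_univ ⟨1, h1⟩ ▸ Set.mem_univ _)
end
end
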